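/- arXiv:2404.06752 — 2 statements merged into one kernel-verified Lean document; each statement's English description precedes it below -/
import Mathlib

section
/- Let T > 0, let B : ℝ → Matrix m m ℝ be continuous with B(t + T) = B(t) for all t and ∫₀^T trace(B(τ)) dτ ≤ 0. Let D be an m×m real diagonal matrix whose diagonal entries all lie in {0, 1} and with trace(D) > 0, let K > 0 and λ > 0 be real numbers, and let Φ : ℝ → Matrix m m ℝ satisfy Φ(0) = I and Φ'(t) = (B(t) − K·λ·D)·Φ(t) for all t. Then det Φ(t) → 0 as t → ∞. -/
open scoped Topology

open Matrix Finset in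
/-- Jacobi's formula: the derivative of the determinant. -/
lemma jacobi_hasDerivAt_det {m : ℕ} (A : ℝ → Matrix (Fin m) (Fin m) ℝ)
    (A' : Matrix (Fin m) (Fin m) ℝ) (t : ℝ)
    (h : ∀ i j, HasDerivAt (fun s => A s i j) (A' i j) t) :
    HasDerivAt (fun s => (A s).det) ((A t).adjugate * A').trace t := by
  have hp : ∀ σ : Equiv.Perm (Fin m), HasDerivAt (fun s => ∏ j, A s (σ j) j)
      (∑ i, (∏ j ∈ Finset.univ.erase i, A t (σ j) j) • A' (σ i) i) t :=
    fun σ => HasDerivAt.fun_finsetProd (fun i _ => h (σ i) i)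
  have hsum : HasDerivAt
      (fun s => ∑ σ : Equiv.Perm (Fin m), ((Equiv.Perm.sign σ : ℤ) : ℝ) * ∏ j, A s (σ j) j)
      (∑ σ : Equiv.Perm (Fin m), ((Equiv.Perm.sign σ : ℤ) : ℝ) *
        ∑ i, (∏ j ∈ Finset.univ.erase i, A t (σ j) j) • A' (σ i) i) t :=
    HasDerivAt.fun_sum (fun σ _ => ((hp σ).const_mul _))
  have hfun : (fun s => ∑ σ : Equiv.Perm (Fin m),
      ((Equiv.Perm.sign σ : ℤ) : ℝ) * ∏ j, A s (σ j) j) = fun s => (A s).det := by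
    funext s
    rw [Matrix.det_apply']
  rw [hfun] at hsum
  convert hsum using 1
  -- the algebraic identity
  have key : ∀ i : Fin m, ∑ σ : Equiv.Perm (Fin m),
      ((Equiv.Perm.sign σ : ℤ) : ℝ) *
        ((∏ j ∈ Finset.univ.erase i, A t (σ j) j) * A' (σ i) i)
      = ((A t).updateCol i fun k => A' k i).det := by
    intro i
    rw [Matrix.det_apply']
    refine Finset.sum_congr rfl (fun σ _ => ?_)
    rw [← Finset.mul_prod_erase _ _ (Finset.mem_univ i)]
    have h1 : ((A t).updateCol i fun k => A' k i) (σ i) i = A' (σ i) i := by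
      simp [Matrix.updateCol_apply]
    have h2 : ∏ j ∈ Finset.univ.erase i, ((A t).updateCol i fun k => A' k i) (σ j) j
        = ∏ j ∈ Finset.univ.erase i, A t (σ j) j := by
      refine Finset.prod_congr rfl (fun j hj => ?_)
      have : j ≠ i := (Finset.mem_erase.mp hj).1
      simp [Matrix.updateCol_apply, this]
    rw [h1, h2]
    ring
  calc ((A t).adjugate * A').trace
      = ∑ i, ∑ k, (A t).adjugate i k * A' k i := by
        simp [Matrix.trace, Matrix.diag, Matrix.mul_apply]
    _ = ∑ i, ((A t).updateCol i fun k => A' k i).det := by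
        refine Finset.sum_congr rfl (fun i _ => ?_)
        have := (Matrix.cramer_eq_adjugate_mulVec (A t) (fun k => A' k i))
        have h3 : (A t).cramer (fun k => A' k i) i = ((A t).updateCol i fun k => A' k i).det :=
          Matrix.cramer_apply _ _ _
        rw [← h3, this]
        simp [Matrix.mulVec, dotProduct]
    _ = ∑ σ : Equiv.Perm (Fin m), ((Equiv.Perm.sign σ : ℤ) : ℝ) *
          ∑ i, (∏ j ∈ Finset.univ.erase i, A t (σ j) j) • A' (σ i) i := by
        simp_rw [← key, smul_eq_mul, Finset.mul_sum]
        rw [Finset.sum_comm]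

/-- **Theorem 2 (partial-state coupling): volume contraction.**
Let `B` be continuous and `T`-periodic with `∫₀ᵀ trace (B τ) dτ ≤ 0`, let `D`
be diagonal with diagonal entries in `{0, 1}` and `trace D > 0`, let
`K > 0`, `λ > 0`, and let `Φ` solve `Φ' = (B(t) − K·λ·D)·Φ`, `Φ 0 = 1`
(derivatives componentwise). Then `det (Φ t) → 0` as `t → ∞`. -/
theorem det_transition_matrix_tendsto_zero (m : ℕ) (T : ℝ) (hT : 0 < T)
    (B : ℝ → Matrix (Fin m) (Fin m) ℝ) (hB : Continuous B)
    (hBper : ∀ t, B (t + T) = B t)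
    (hBtr : (∫ τ in (0:ℝ)..T, (B τ).trace) ≤ 0)
    (D : Matrix (Fin m) (Fin m) ℝ) (hDdiag : D.IsDiag)
    (hD01 : ∀ i, D i i = 0 ∨ D i i = 1) (hDtr : 0 < D.trace)
    (K lam : ℝ) (hK : 0 < K) (hlam : 0 < lam)
    (Φ : ℝ → Matrix (Fin m) (Fin m) ℝ) (hΦ0 : Φ 0 = 1)
    (hΦ : ∀ t i j, HasDerivAt (fun s => Φ s i j) (((B t - (K * lam) • D) * Φ t) i j) t) :
    Filter.Tendsto (fun t => (Φ t).det) Filter.atTop (𝓝 0) := by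
  -- the scalar coefficient
  set a : ℝ → ℝ := fun t => (B t - (K * lam) • D).trace with ha_def
  have hBtrc : Continuous fun t => (B t).trace := by
    have : ∀ i : Fin m, Continuous fun t => B t i i := fun i =>
      (continuous_apply i).comp ((continuous_apply i).comp hB)
    exact continuous_finset_sum _ fun i _ => this i
  have ha_eq : ∀ t, a t = (B t).trace - K * lam * D.trace := by
    intro t
    simp [ha_def, Matrix.trace_sub, Matrix.trace_smul, smul_eq_mul]
  have hacont : Continuous a := by
    simp only [funext ha_eq]
    exact hBtrc.sub continuous_const
  have haper : Function.Periodic a T := by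
    intro t; simp [ha_eq, hBper t]
  -- the integral of a over a period is negative
  have haint : (∫ τ in (0:ℝ)..T, a τ) < 0 := by
    have h1 : (∫ τ in (0:ℝ)..T, a τ)
        = (∫ τ in (0:ℝ)..T, (B τ).trace) - T * (K * lam * D.trace) := by
      simp_rw [ha_eq]
      rw [intervalIntegral.integral_sub (hBtrc.intervalIntegrable _ _)
        (intervalIntegrable_const), intervalIntegral.integral_const]
      simp [smul_eq_mul]
    have h2 : 0 < T * (K * lam * D.trace) := by positivity
    linarith
  -- F is the primitive of a
  set F : ℝ → ℝ := fun t => ∫ s in (0:ℝ)..t, a s with hF_def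
  have hF : ∀ t, HasDerivAt F (a t) t := fun t =>
    (hacont.integral_hasStrictDerivAt 0 t).hasDerivAt
  -- derivative of the determinant
  have hdet : ∀ t, HasDerivAt (fun s => (Φ s).det) (a t * (Φ t).det) t := by
    intro t
    have := jacobi_hasDerivAt_det Φ ((B t - (K * lam) • D) * Φ t) t (hΦ t)
    convert this using 1
    rw [← Matrix.mul_assoc, Matrix.trace_mul_comm, ← Matrix.mul_assoc,
      Matrix.mul_adjugate, Matrix.smul_mul, Matrix.one_mul, Matrix.trace_smul,
      smul_eq_mul, mul_comm]
  -- the function g t = det Φ t * exp (-F t) is constant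
  set g : ℝ → ℝ := fun t => (Φ t).det * Real.exp (-F t) with hg_def
  have hg' : ∀ t, HasDerivAt g 0 t := by
    intro t
    have h1 : HasDerivAt (fun s => Real.exp (-F s)) (-a t * Real.exp (-F t)) t := by
      have := (((hF t).neg).exp)
      convert this using 1
      · rfl
      · show _ = Real.exp (-F t) * -a t; ring
    have := (hdet t).mul h1
    convert this using 1
    · rfl
    · rfl
    · rfl
    · ring
  have hgconst : ∀ t, g t = 1 := by
    intro t
    have hdiff : Differentiable ℝ g := fun x => (hg' x).differentiableAt
    have hderiv : ∀ x, deriv g x = 0 := fun x => (hg' x).deriv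
    have := is_const_of_deriv_eq_zero hdiff hderiv t 0
    rw [this]
    simp [hg_def, hF_def, hΦ0]
  have hdet_eq : ∀ t, (Φ t).det = Real.exp (F t) := by
    intro t
    have := hgconst t
    rw [hg_def] at this
    have h2 := congrArg (fun x => x * Real.exp (F t)) this
    simp only [mul_assoc, ← Real.exp_add] at h2
    rw [show -F t + F t = 0 by ring] at h2
    simpa using h2
  -- F → -∞
  have hFbot : Filter.Tendsto F Filter.atTop Filter.atBot := by
    have hneg : Function.Periodic (fun t => -a t) T := fun t => by simp [haper t]
    have hint : ∀ t₁ t₂ : ℝ, IntervalIntegrable (fun t => -a t) MeasureTheory.volume t₁ t₂ :=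
      fun t₁ t₂ => (hacont.neg).intervalIntegrable _ _
    have hpos : 0 < ∫ x in (0:ℝ)..T, -a x := by
      rw [intervalIntegral.integral_neg]; linarith
    have := hneg.tendsto_atTop_intervalIntegral_of_pos hpos hT
    have heq : (fun t => ∫ x in (0:ℝ)..t, -a x) = fun t => -F t := by
      funext t; rw [intervalIntegral.integral_neg]
    rw [heq] at this
    have h4 := Filter.tendsto_neg_atTop_atBot.comp this
    have heq2 : (Neg.neg ∘ fun t => -F t) = F := by funext t; simp
    rwa [heq2] at h4
  have : Filter.Tendsto (fun t => Real.exp (F t)) Filter.atTop (𝓝 0) :=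
    Real.tendsto_exp_atBot.comp hFbot
  simpa [funext hdet_eq] using this
end

section
/- Let Q and G be n×n real matrices with Q invertible and Q⁻¹·G·Q = diag(d₁,…,dₙ), let B : ℝ → Matrix m m ℝ, let D be an m×m real matrix, and let K be real. Suppose Y : ℝ → ℝ^{n·m} satisfies Y'(t) = ((I_n ⊗ B(t)) − K·(G ⊗ D))·Y(t) for all t, and define ζ(t) := (Q⁻¹ ⊗ I_m)·Y(t). Then for each index i ∈ {1,…,n}, the m-dimensional component ζᵢ(t) := (ζ(t)_{(i,1)},…,ζ(t)_{(i,m)}) satisfies ζᵢ'(t) = (B(t) − K·dᵢ·D)·ζᵢ(t) for all t. -/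
open scoped Kronecker

/-- **Eigenmode decoupling of the variational dynamics.**
If `Q⁻¹·G·Q = diag d`, `Y` solves the variational equation
`Y' = ((I_n ⊗ B(t)) − K·(G ⊗ D))·Y` (derivatives componentwise), and
`ζ(t) = (Q⁻¹ ⊗ I_m)·Y(t)`, then each `m`-dimensional component
`ζᵢ(t) = (ζ(t)_(i,1), …, ζ(t)_(i,m))` satisfies
`ζᵢ' = (B(t) − K·dᵢ·D)·ζᵢ`. -/
theorem eigenmode_decoupling (n m : ℕ)
    (Q G : Matrix (Fin n) (Fin n) ℝ) (hQ : IsUnit Q.det)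
    (d : Fin n → ℝ) (hdiag : Q⁻¹ * G * Q = Matrix.diagonal d)
    (B : ℝ → Matrix (Fin m) (Fin m) ℝ) (D : Matrix (Fin m) (Fin m) ℝ)
    (K : ℝ) (Y : ℝ → Fin n × Fin m → ℝ)
    (hY : ∀ t p, HasDerivAt (fun s => Y s p)
      (((((1 : Matrix (Fin n) (Fin n) ℝ) ⊗ₖ B t) - K • (G ⊗ₖ D)).mulVec (Y t)) p) t)
    (ζ : ℝ → Fin n × Fin m → ℝ)
    (hζ : ∀ t, ζ t = ((Q⁻¹ ⊗ₖ (1 : Matrix (Fin m) (Fin m) ℝ))).mulVec (Y t)) :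
    ∀ (i : Fin n) (t : ℝ) (j : Fin m),
      HasDerivAt (fun s => ζ s (i, j))
        (((B t - (K * d i) • D).mulVec (fun j' => ζ t (i, j'))) j) t := by
  intro i t j
  have key : ∀ k, ∑ p, Q⁻¹ i p * G p k = d i * Q⁻¹ i k := by
    have hQG : Q⁻¹ * G = Matrix.diagonal d * Q⁻¹ := by
      calc Q⁻¹ * G = (Q⁻¹ * G * Q) * Q⁻¹ := by
            rw [Matrix.mul_assoc, Matrix.mul_nonsing_inv _ hQ, Matrix.mul_one]
        _ = Matrix.diagonal d * Q⁻¹ := by rw [hdiag]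
    intro k
    have h := congrFun (congrFun hQG i) k
    simpa [Matrix.mul_apply, Matrix.diagonal_apply, ite_mul, zero_mul,
      Finset.sum_ite_eq, Finset.mem_univ] using h
  set A := (Q⁻¹ ⊗ₖ (1 : Matrix (Fin m) (Fin m) ℝ)) with hA
  set M := ((1 : Matrix (Fin n) (Fin n) ℝ) ⊗ₖ B t) - K • (G ⊗ₖ D) with hM
  have hder : HasDerivAt (fun s => ζ s (i, j))
      (∑ p, A (i, j) p * (M.mulVec (Y t)) p) t := by
    have heq : (fun s => ζ s (i, j)) = fun s => ∑ p, A (i, j) p * Y s p := by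
      funext s; rw [hζ s]; rfl
    rw [heq]
    exact HasDerivAt.fun_sum (fun p _ => (hY t p).const_mul _)
  convert hder using 1
  have h1 : ∀ (j' : Fin m) (v : Fin n × Fin m → ℝ),
      ∑ p, A (i, j') p * v p = ∑ k, Q⁻¹ i k * v (k, j') := by
    intro j' v
    rw [Fintype.sum_prod_type]
    refine Finset.sum_congr rfl fun k _ => ?_
    simp [hA, Matrix.one_apply, mul_ite, mul_one, mul_zero, ite_mul, zero_mul,
      Finset.sum_ite_eq, Finset.mem_univ]
  have hzeta : ∀ q, ζ t (i, q) = ∑ k, Q⁻¹ i k * Y t (k, q) := by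
    intro q
    rw [hζ t]
    exact h1 q (Y t)
  have h2 : ∀ k, (M.mulVec (Y t)) (k, j) =
      (∑ q, B t j q * Y t (k, q)) - K * ∑ p, ∑ q, G k p * D j q * Y t (p, q) := by
    intro k
    simp only [hM, Matrix.mulVec, dotProduct, Matrix.sub_apply, Matrix.smul_apply,
      Matrix.kroneckerMap_apply, Matrix.one_apply, smul_eq_mul, Fintype.sum_prod_type,
      sub_mul, Finset.sum_sub_distrib]
    congr 1
    · simp [ite_mul, zero_mul, one_mul, Finset.sum_ite_eq, Finset.mem_univ]
    · rw [Finset.mul_sum]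
      refine Finset.sum_congr rfl fun p _ => ?_
      rw [Finset.mul_sum]
      exact Finset.sum_congr rfl fun q _ => by ring
  rw [h1 j, Matrix.mulVec, dotProduct]
  simp only [h2, Matrix.sub_apply, Matrix.smul_apply, smul_eq_mul, sub_mul, mul_sub,
    Finset.sum_sub_distrib, hzeta]
  congr 1
  · calc ∑ q, B t j q * ∑ k, Q⁻¹ i k * Y t (k, q)
        = ∑ q, ∑ k, Q⁻¹ i k * (B t j q * Y t (k, q)) := by
          refine Finset.sum_congr rfl fun q _ => ?_
          rw [Finset.mul_sum]
          exact Finset.sum_congr rfl fun k _ => by ring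
      _ = ∑ k, ∑ q, Q⁻¹ i k * (B t j q * Y t (k, q)) := Finset.sum_comm
      _ = ∑ k, Q⁻¹ i k * ∑ q, B t j q * Y t (k, q) := by
          refine Finset.sum_congr rfl fun k _ => ?_
          rw [Finset.mul_sum]
  · calc ∑ q, K * d i * D j q * ∑ k, Q⁻¹ i k * Y t (k, q)
        = ∑ q, ∑ p, (d i * Q⁻¹ i p) * (K * (D j q * Y t (p, q))) := by
          refine Finset.sum_congr rfl fun q _ => ?_
          rw [Finset.mul_sum]
          exact Finset.sum_congr rfl fun p _ => by ring
      _ = ∑ q, ∑ p, (∑ k, Q⁻¹ i k * G k p) * (K * (D j q * Y t (p, q))) := by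
          refine Finset.sum_congr rfl fun q _ => Finset.sum_congr rfl fun p _ => ?_
          rw [key p]
      _ = ∑ q, ∑ p, ∑ k, Q⁻¹ i k * (K * (G k p * D j q * Y t (p, q))) := by
          refine Finset.sum_congr rfl fun q _ => Finset.sum_congr rfl fun p _ => ?_
          rw [Finset.sum_mul]
          exact Finset.sum_congr rfl fun k _ => by ring
      _ = ∑ p, ∑ q, ∑ k, Q⁻¹ i k * (K * (G k p * D j q * Y t (p, q))) := Finset.sum_comm
      _ = ∑ p, ∑ k, ∑ q, Q⁻¹ i k * (K * (G k p * D j q * Y t (p, q))) := by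
          exact Finset.sum_congr rfl fun p _ => Finset.sum_comm
      _ = ∑ k, ∑ p, ∑ q, Q⁻¹ i k * (K * (G k p * D j q * Y t (p, q))) := Finset.sum_comm
      _ = ∑ k, Q⁻¹ i k * (K * ∑ p, ∑ q, G k p * D j q * Y t (p, q)) := by
          refine Finset.sum_congr rfl fun k _ => ?_
          simp only [Finset.mul_sum]
end
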